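/- Let τ > 0, z₀ ∈ ℝ and t, ϑ ∈ ℝ satisfy cos ϑ = (τ² cosh² t + (τ t + z₀)²)/(2τ cosh t) (i.e. (t,ϑ) lies on the curve where the catenoid meets the unit sphere). Then ⟨κ̂(t,ϑ), ν(t,ϑ)⟩ = (1/(2τ))·(z₀ + τ t)²·sech² t − τ/2 + (z₀ + τ t)·tanh t. -/

import Mathlib

/-! The `τ cosh t`-terms of `κ̂` pair with `ν` to `−τ (cos² ϑ + sin² ϑ) = −τ`, so on the whole
catenoid `Θ = sech t cos ϑ − τ + (τ t + z₀) tanh t`. On the boundary curve, substituting the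
prescribed value of `cos ϑ` splits `sech t cos ϑ` into `τ/2 + (τ t + z₀)² sech² t / (2τ)`. -/

open scoped RealInnerProductSpace

noncomputable section

/-- The catenoid parametrization `κ̂(t,ϑ) = (1 − τ cosh t cos ϑ, τ cosh t sin ϑ, τ t + z₀)`. -/
def kappaHat (τ z₀ : ℝ) (t ϑ : ℝ) : EuclideanSpace ℝ (Fin 3) :=
  !₂[1 - τ * Real.cosh t * Real.cos ϑ, τ * Real.cosh t * Real.sin ϑ, τ * t + z₀]

/-- The field `ν(t,ϑ) = (sech t cos ϑ, − sech t sin ϑ, tanh t)`. -/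
def nuCat (t ϑ : ℝ) : EuclideanSpace ℝ (Fin 3) :=
  !₂[(Real.cosh t)⁻¹ * Real.cos ϑ, -((Real.cosh t)⁻¹ * Real.sin ϑ), Real.tanh t]

theorem inner_kappaHat_nuCat (τ z₀ t ϑ : ℝ) :
    ⟪kappaHat τ z₀ t ϑ, nuCat t ϑ⟫ =
      (Real.cosh t)⁻¹ * Real.cos ϑ - τ + (τ * t + z₀) * Real.tanh t := by
  have hcosh : Real.cosh t ≠ 0 := (Real.cosh_pos t).ne'
  simp only [kappaHat, nuCat, PiLp.inner_apply, RCLike.inner_apply, conj_trivial,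
    Fin.sum_univ_three, Matrix.cons_val_zero, Matrix.cons_val_one, Matrix.head_cons,
    Matrix.cons_val_two, Matrix.tail_cons]
  field_simp
  linear_combination -τ * Real.cosh t * Real.sin_sq_add_cos_sq ϑ

/-- Along the intersection curve of the catenoid with the unit sphere, i.e. where
`cos ϑ = (τ² cosh² t + (τ t + z₀)²)/(2τ cosh t)`, the function `Θ = ⟨κ̂, ν⟩` equals
`(1/(2τ)) (z₀ + τ t)² sech² t − τ/2 + (z₀ + τ t) tanh t`. -/
theorem Theta_on_boundary_curve (τ z₀ t ϑ : ℝ) (hτ : 0 < τ)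
    (hcurve : Real.cos ϑ =
      (τ ^ 2 * Real.cosh t ^ 2 + (τ * t + z₀) ^ 2) / (2 * τ * Real.cosh t)) :
    ⟪kappaHat τ z₀ t ϑ, nuCat t ϑ⟫ =
      1 / (2 * τ) * (z₀ + τ * t) ^ 2 * ((Real.cosh t)⁻¹) ^ 2 - τ / 2 +
        (z₀ + τ * t) * Real.tanh t := by
  have hτ₀ : τ ≠ 0 := hτ.ne'
  have hcosh : Real.cosh t ≠ 0 := (Real.cosh_pos t).ne'
  rw [inner_kappaHat_nuCat, hcurve]
  field_simp
  ring

end
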